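/- Let f_n, f be probability mass functions on ℕ with ‖f_n - f‖_{ℓ¹(g)} → 0 and let (m_n) be a sequence of positive integers tending to infinity. Then Σ_{k=0}^{m_n} f_n(k) g_{m_n}(k) → Σ_k f(k) g(k), where g_{m}(k) = -log( C(m,k)(k/m)^k((m-k)/m)^{m-k} ) and g(k) = log(k!) - k log k + k. -/

import Mathlib

/-- `g k = log(k! / (k^k e^{-k}))`. -/
noncomputable def g (k : ℕ) : ℝ :=
  Real.log (Nat.factorial k) - k * Real.log k + k

/-- `gBin m k = - log( C(m,k) (k/m)^k ((m-k)/m)^{m-k} )`. -/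
noncomputable def gBin (m k : ℕ) : ℝ :=
  - Real.log ((m.choose k : ℝ) * ((k : ℝ) / m) ^ k * (((m - k : ℕ) : ℝ) / m) ^ (m - k))

/-!
Writing `g k = log (k! / k ^ k) + k`, the binomial weight is `gBin (j + k) k = g j + g k - g (j + k)`.
As `g` is increasing with increments at most `1 / (n + 1)`, this gives `0 ≤ gBin m k ≤ g k` and
`gBin m k → g k` as `m → ∞`. Dominated convergence (with bound `|f k| g k`) then gives the limit
with `f` in place of `F n`, and replacing `f` by `F n` costs at most `Σ |F n k - f k| g k`.
-/

open Filter Topology Finset Real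

theorem tendsto_tsum_mul_of_dominated {α ι : Type*} {l : Filter α} {F G : α → ι → ℝ}
    {f w : ι → ℝ} (hfw : Summable fun k => f k * w k)
    (hdist : ∀ n, Summable fun k => |F n k - f k| * w k)
    (hconv : Tendsto (fun n => ∑' k, |F n k - f k| * w k) l (𝓝 0))
    (hG : ∀ n k, |G n k| ≤ w k) (hGlim : ∀ k, Tendsto (fun n => G n k) l (𝓝 (w k))) :
    Tendsto (fun n => ∑' k, F n k * G n k) l (𝓝 (∑' k, f k * w k)) := by
  have hfG (n : α) (k : ι) : ‖f k * G n k‖ ≤ |f k * w k| := by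
    rw [norm_mul, abs_mul]
    exact mul_le_mul_of_nonneg_left ((hG n k).trans (le_abs_self _)) (abs_nonneg _)
  have hdiffG (n : α) (k : ι) : ‖(F n k - f k) * G n k‖ ≤ |F n k - f k| * w k := by
    rw [norm_mul]
    exact mul_le_mul_of_nonneg_left (hG n k) (abs_nonneg _)
  have hlim : Tendsto (fun n => ∑' k, f k * G n k) l (𝓝 (∑' k, f k * w k)) :=
    tendsto_tsum_of_dominated_convergence hfw.abs (fun k => (hGlim k).const_mul (f k))
      (Eventually.of_forall hfG)
  have hsub : Tendsto (fun n => ∑' k, F n k * G n k - ∑' k, f k * G n k) l (𝓝 0) := by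
    refine squeeze_zero_norm (fun n => ?_) hconv
    have hsum_f := hfw.abs.of_norm_bounded (hfG n)
    have hsum_diff := (hdist n).of_norm_bounded (hdiffG n)
    have hsum_F : Summable fun k => F n k * G n k := by
      simpa [sub_mul] using hsum_diff.add hsum_f
    rw [← hsum_F.tsum_sub hsum_f]
    simp_rw [← sub_mul]
    exact tsum_of_norm_bounded (hdist n).hasSum (hdiffG n)
  simpa using hsub.add hlim

theorem choose_mul_pow_mul_pow_le_one {p q : ℝ} (hp : 0 ≤ p) (hq : 0 ≤ q) (hpq : p + q = 1)
    {m k : ℕ} (hk : k ≤ m) : m.choose k * p ^ k * q ^ (m - k) ≤ 1 := by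
  have hsum : ∑ i ∈ range (m + 1), p ^ i * q ^ (m - i) * m.choose i = 1 := by
    rw [← add_pow, hpq, one_pow]
  calc m.choose k * p ^ k * q ^ (m - k) = p ^ k * q ^ (m - k) * m.choose k := by ring
    _ ≤ 1 := hsum ▸ single_le_sum (f := fun i => p ^ i * q ^ (m - i) * m.choose i)
        (fun i _ => by positivity) (mem_range_succ_iff.mpr hk)

theorem natCast_pow_self_pos (n : ℕ) : 0 < (n : ℝ) ^ n := by exact_mod_cast Nat.pow_self_pos

theorem g_eq_log_factorial_div_pow_self (n : ℕ) : g n = log (n.factorial / n ^ n : ℝ) + n := by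
  rw [g, log_div (by positivity) (natCast_pow_self_pos n).ne', log_pow]

theorem g_add_one_sub (n : ℕ) : g (n + 1) - g n = 1 - n * (log (n + 1) - log n) := by
  simp only [g, Nat.factorial_succ, Nat.cast_mul, Nat.cast_add_one,
    log_mul (by positivity : (n + 1 : ℝ) ≠ 0) (by positivity : (n.factorial : ℝ) ≠ 0)]
  ring

theorem g_add_one_sub_nonneg (n : ℕ) : 0 ≤ g (n + 1) - g n := by
  rcases n.eq_zero_or_pos with rfl | hn
  · simp [g_add_one_sub]
  have hn : (0 : ℝ) < n := by exact_mod_cast hn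
  have hlog : log (n + 1) - log n ≤ 1 / n := by
    rw [← log_div (by positivity) hn.ne']
    calc log ((n + 1) / n) ≤ (n + 1) / n - 1 := log_le_sub_one_of_pos (by positivity)
      _ = 1 / n := by field_simp; ring
  rw [g_add_one_sub, sub_nonneg]
  calc n * (log (n + 1) - log n) ≤ n * (1 / n) := by gcongr
    _ = 1 := by field_simp

theorem g_add_one_sub_le (n : ℕ) : g (n + 1) - g n ≤ 1 / (n + 1) := by
  rcases n.eq_zero_or_pos with rfl | hn
  · simp [g_add_one_sub]
  have hn : (0 : ℝ) < n := by exact_mod_cast hn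
  have hlog : 1 / (n + 1) ≤ log (n + 1) - log n := by
    rw [← log_div (by positivity) hn.ne']
    calc 1 / (n + 1 : ℝ) = 1 - ((n + 1 : ℝ) / n)⁻¹ := by field_simp; ring
      _ ≤ log ((n + 1) / n) := one_sub_inv_le_log_of_pos (by positivity)
  rw [g_add_one_sub]
  calc 1 - n * (log (n + 1) - log n) ≤ 1 - n * (1 / (n + 1)) := by gcongr
    _ = 1 / (n + 1) := by field_simp; ring

theorem monotone_g : Monotone g :=
  monotone_nat_of_le_succ fun n => sub_nonneg.mp (g_add_one_sub_nonneg n)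

theorem g_nonneg (n : ℕ) : 0 ≤ g n :=
  (by simp [g] : g 0 = 0) ▸ monotone_g n.zero_le

theorem tendsto_g_add_sub (k : ℕ) : Tendsto (fun n => g (n + k) - g n) atTop (𝓝 0) := by
  have hstep : Tendsto (fun n => g (n + 1) - g n) atTop (𝓝 0) :=
    squeeze_zero g_add_one_sub_nonneg g_add_one_sub_le
      tendsto_one_div_add_atTop_nhds_zero_nat
  have htel (n : ℕ) : g (n + k) - g n = ∑ i ∈ range k, (g (n + i + 1) - g (n + i)) :=
    (sum_range_sub (fun i => g (n + i)) k).symm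
  simp_rw [htel]
  simpa using tendsto_finsetSum (f := fun i n => g (n + i + 1) - g (n + i)) (range k) fun i _ =>
    (tendsto_add_atTop_iff_nat i).mpr hstep

theorem gBin_add (j k : ℕ) : gBin (j + k) k = g j + g k - g (j + k) := by
  rcases (j + k).eq_zero_or_pos with h | h
  · obtain ⟨rfl, rfl⟩ := Nat.add_eq_zero_iff.mp h
    simp [gBin, g]
  have hj := natCast_pow_self_pos j
  have hk := natCast_pow_self_pos k
  have hjk := natCast_pow_self_pos (j + k)
  have hprod : ((j + k).choose k : ℝ) * (k / (j + k : ℕ)) ^ k * (j / (j + k : ℕ)) ^ j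
      = ((j + k).factorial / (j + k : ℕ) ^ (j + k)) / ((j.factorial / j ^ j) * (k.factorial / k ^ k)) := by
    rw [Nat.cast_choose ℝ (Nat.le_add_left k j), Nat.add_sub_cancel, div_pow, div_pow]
    have : ((j + k : ℕ) : ℝ) ≠ 0 := by positivity
    field_simp
    ring
  rw [gBin, Nat.add_sub_cancel, hprod, log_div (by positivity) (by positivity),
    log_mul (by positivity) (by positivity), g_eq_log_factorial_div_pow_self,
    g_eq_log_factorial_div_pow_self, g_eq_log_factorial_div_pow_self]
  push_cast
  ring

theorem gBin_nonneg {m k : ℕ} (hk : k ≤ m) : 0 ≤ gBin m k := by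
  rcases m.eq_zero_or_pos with rfl | hm
  · simp [Nat.le_zero.mp hk, gBin]
  have hm : (0 : ℝ) < m := by exact_mod_cast hm
  have hsum : (k / m : ℝ) + ((m - k : ℕ) / m : ℝ) = 1 := by
    rw [← add_div, Nat.cast_sub hk, add_sub_cancel, div_self hm.ne']
  exact neg_nonneg.mpr (log_nonpos (by positivity)
    (choose_mul_pow_mul_pow_le_one (by positivity) (by positivity) hsum hk))

theorem gBin_le {m k : ℕ} (hk : k ≤ m) : gBin m k ≤ g k := by
  obtain ⟨j, rfl⟩ := Nat.exists_eq_add_of_le' hk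
  rw [gBin_add]
  linarith [monotone_g (Nat.le_add_right j k)]

theorem tendsto_gBin (k : ℕ) : Tendsto (fun m => gBin m k) atTop (𝓝 (g k)) := by
  rw [← tendsto_add_atTop_iff_nat k]
  simp_rw [gBin_add]
  have hlim := (tendsto_g_add_sub k).const_sub (g k)
  rw [sub_zero] at hlim
  exact hlim.congr fun n => by ring

theorem weighted_binomial_sum_tendsto_general (f : ℕ → ℝ) (F : ℕ → ℕ → ℝ) (m : ℕ → ℕ)
    (hfg : Summable (fun k => f k * g k))
    (hdiff : ∀ n, Summable (fun k => |F n k - f k| * g k))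
    (hconv : Filter.Tendsto (fun n => ∑' k, |F n k - f k| * g k) Filter.atTop (nhds 0))
    (hm : Filter.Tendsto m Filter.atTop Filter.atTop) :
    Filter.Tendsto
      (fun n => ∑ k ∈ Finset.range (m n + 1), F n k * gBin (m n) k)
      Filter.atTop (nhds (∑' k, f k * g k)) := by
  set G : ℕ → ℕ → ℝ := fun n => Set.indicator (Set.Iic (m n)) (gBin (m n))
  have hsum (n : ℕ) : ∑ k ∈ range (m n + 1), F n k * gBin (m n) k = ∑' k, F n k * G n k := by
    rw [tsum_eq_sum (s := range (m n + 1)) fun k hk => by simp_all [G]]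
    exact sum_congr rfl fun k hk => by simp_all [G]
  have hG (n k : ℕ) : |G n k| ≤ g k := by
    by_cases hk : k ≤ m n
    · simpa [G, hk, abs_of_nonneg (gBin_nonneg hk)] using gBin_le hk
    · simpa [G, hk] using g_nonneg k
  have hGlim (k : ℕ) : Tendsto (fun n => G n k) atTop (𝓝 (g k)) :=
    ((tendsto_gBin k).comp hm).congr' <| (hm.eventually_ge_atTop k).mono fun n hk => by
      simp [G, hk]
  simpa only [hsum] using tendsto_tsum_mul_of_dominated hfg hdiff hconv hG hGlim

/-- if `f_n, f` are pmfs on `ℕ` with `‖f_n - f‖_{ℓ¹(g)} → 0` and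
`m_n → ∞`, then `Σ_{k=0}^{m_n} f_n(k) g_{m_n}(k) → Σ_k f(k) g(k)`. -/
theorem weighted_binomial_sum_tendsto (f : ℕ → ℝ) (F : ℕ → ℕ → ℝ) (m : ℕ → ℕ)
    (hf0 : ∀ k, 0 ≤ f k) (hf1 : HasSum f 1)
    (hF0 : ∀ n k, 0 ≤ F n k) (hF1 : ∀ n, HasSum (F n) 1)
    (hfg : Summable (fun k => f k * g k))
    (hdiff : ∀ n, Summable (fun k => |F n k - f k| * g k))
    (hconv : Filter.Tendsto (fun n => ∑' k, |F n k - f k| * g k) Filter.atTop (nhds 0))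
    (hm : Filter.Tendsto m Filter.atTop Filter.atTop) :
    Filter.Tendsto
      (fun n => ∑ k ∈ Finset.range (m n + 1), F n k * gBin (m n) k)
      Filter.atTop (nhds (∑' k, f k * g k)) :=
  weighted_binomial_sum_tendsto_general f F m hfg hdiff hconv hm
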